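/- Let n ≥ 1, δ ∈ (0,1), ε ∈ (0,1), and let V_1,…,V_n be independent random variables, each uniformly distributed on [0,1]. Then P( Σ_{t=1}^n S_ε(V_t) ≥ √(2 n log(1/ε) log(1/δ)) + (3/2)·log(1/δ)/√ε ) ≤ δ. In particular, the exact critical value τ_⋆ satisfying P(Σ_{t=1}^n S_ε(V_t) ≥ τ_⋆) = δ obeys τ_⋆ ≤ √(2 n log(1/ε) log(1/δ)) + (3/2)·log(1/δ)/√ε. -/

import Mathlib

/-!
Bernstein's inequality. Each `S_ε(V_t)` is bounded above by `b = 1/√ε`, centred, and has variance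
`1 + log(1/ε) - (2 - √ε)² ≤ log(1/ε)`, the moments coming from
`∫₀¹ min(1/√ε, 1/√t)^k dt = ε^(1 - k/2) + ∫_ε^1 t^(-k/2) dt` for `k = 1, 2`.
From `exp y ≤ 1 + y + y² e^{tb}/2` for `y ≤ tb` one gets `E e^{tS} ≤ exp(t² σ² e^{tb}/2)`, and
the Chernoff bound with `t = s/(1 + bs)`, `s = √(2x/(nσ²))` gives
`P(∑ S ≥ √(2nσ²x) + c b x) ≤ exp(-x(1 + cbs)/(1 + bs)) < e^{-x}` for every `c > 1`.
Take `x = log(1/δ)` and `c = 3/2`; the strictness of the last inequality bounds the critical value.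
-/

open MeasureTheory ProbabilityTheory

/-- The statistic `S_ε(u) = min(1/√ε, 1/√(1−u)) − (2 − √ε)` for `u ∈ [0,1)`,
extended by the value `1/√ε − (2 − √ε)` at `u ≥ 1`. -/
noncomputable def Sstat (ε u : ℝ) : ℝ :=
  (if u < 1 then min (Real.sqrt ε)⁻¹ (Real.sqrt (1 - u))⁻¹ else (Real.sqrt ε)⁻¹)
    - (2 - Real.sqrt ε)

open Real Set

lemma exp_le_one_add_add_sq_div_two {y : ℝ} (hy : y ≤ 0) : exp y ≤ 1 + y + y ^ 2 / 2 := by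
  -- `(1 - y + y²/2)(1 + y + y²/2) = 1 + y⁴/4`, and `exp (-y) ≥ 1 - y + y²/2`
  have hneg := quadratic_le_exp_of_nonneg (neg_nonneg.2 hy)
  have hinv : exp y * exp (-y) = 1 := by rw [← exp_add, add_neg_cancel, exp_zero]
  nlinarith [exp_pos y, sq_nonneg (y ^ 2), sq_nonneg (y + 1)]

lemma one_le_one_add_mul_exp_neg_add_sq_div_two {y : ℝ} (hy : 0 ≤ y) :
    1 ≤ (1 + y) * exp (-y) + y ^ 2 / 2 := by
  have hmono : MonotoneOn (fun y ↦ (1 + y) * exp (-y) + y ^ 2 / 2) (Ici 0) := by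
    refine monotoneOn_of_deriv_nonneg (convex_Ici 0) (by fun_prop) (by fun_prop) fun z hz ↦ ?_
    rw [interior_Ici, mem_Ioi] at hz
    have hderiv : HasDerivAt (fun y ↦ (1 + y) * exp (-y) + y ^ 2 / 2)
        (z * (1 - exp (-z))) z := by
      refine ((((hasDerivAt_id z).const_add 1).mul (hasDerivAt_neg z).exp).add
        ((hasDerivAt_pow 2 z).div_const 2)).congr_deriv ?_
      simp only [id_eq, Nat.cast_ofNat]
      ring
    rw [hderiv.deriv]
    have : exp (-z) ≤ 1 := exp_le_one_iff.2 (by linarith)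
    nlinarith
  simpa using hmono self_mem_Ici hy hy

lemma exp_le_one_add_add_sq_div_two_mul_exp {y c : ℝ} (hyc : y ≤ c) (hc : 0 ≤ c) :
    exp y ≤ 1 + y + y ^ 2 / 2 * exp c := by
  rcases le_total y 0 with hy | hy
  · nlinarith [exp_le_one_add_add_sq_div_two hy, one_le_exp hc, sq_nonneg y]
  · have h := one_le_one_add_mul_exp_neg_add_sq_div_two hy
    have hinv : exp (-y) * exp y = 1 := by rw [← exp_add, neg_add_cancel, exp_zero]
    have : exp y ≤ 1 + y + y ^ 2 / 2 * exp y := by nlinarith [exp_pos y]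
    nlinarith [exp_le_exp.2 hyc, sq_nonneg y]

lemma exists_bernstein_exponent_lt_neg {v b x c : ℝ} (hv : 0 < v) (hb : 0 < b) (hx : 0 < x)
    (hc : 1 < c) :
    ∃ t, 0 ≤ t ∧ v * t ^ 2 * exp (t * b) / 2 - t * (√(2 * v * x) + c * b * x) < -x := by
  -- `t = s / (1 + b s)` with `s = √(2x/v)`, for which `exp (t b) ≤ 1 / (1 - t b) = 1 + b s`
  set s : ℝ := √(2 * v * x) / v
  have hs : 0 < s := by positivity
  have hsv : √(2 * v * x) = s * v := (div_mul_cancel₀ _ hv.ne').symm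
  have hs2v : s ^ 2 * v = 2 * x := by
    have := sq_sqrt (show 0 ≤ 2 * v * x by positivity)
    rw [hsv] at this
    field_simp at this ⊢; linarith
  have hbs : 0 < b * s := mul_pos hb hs
  set t : ℝ := s / (1 + b * s)
  have htu : t * (1 + b * s) = s := div_mul_cancel₀ _ (by positivity)
  have htb : t * b < 1 := by
    rw [div_mul_eq_mul_div, div_lt_one (by positivity)]; linarith
  have hexp : exp (t * b) ≤ 1 + b * s := by
    have := exp_bound_div_one_sub_of_interval (by positivity) htb
    have h1 : 1 - t * b = (1 + b * s)⁻¹ := by simp only [t]; field_simp; ring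
    rwa [h1, one_div, inv_inv] at this
  refine ⟨t, by positivity, ?_⟩
  have hle : v * t ^ 2 * exp (t * b) / 2 ≤ v * t ^ 2 * (1 + b * s) / 2 := by gcongr
  have hgap : (v * t ^ 2 * (1 + b * s) / 2 - t * (s * v + c * b * x) + x) * (1 + b * s)
      = -((c - 1) * x * (b * s)) := by
    linear_combination (v / 2 * (t * (1 + b * s) + s) - (s * v + c * b * x)) * htu - 1 / 2 * hs2v
  rw [hsv]
  nlinarith [mul_pos (mul_pos (sub_pos.2 hc) hx) hbs]

section Bernstein

variable {Ω : Type*} [MeasurableSpace Ω] {μ : Measure Ω} [IsProbabilityMeasure μ]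

lemma mgf_le_exp_of_ae_le {X : Ω → ℝ} {b σ2 t : ℝ} (hX : MemLp X 2 μ)
    (hXb : ∀ᵐ ω ∂μ, X ω ≤ b) (hb : 0 ≤ b) (hmean : μ[X] = 0) (hvar : Var[X; μ] ≤ σ2)
    (ht : 0 ≤ t) : mgf X μ t ≤ exp (t ^ 2 * σ2 * exp (t * b) / 2) := by
  have hsq : ∫ ω, X ω ^ 2 ∂μ ≤ σ2 := by simpa [variance_eq_sub hX, hmean] using hvar
  have hX1 : Integrable X μ := hX.integrable one_le_two
  have hX2 : Integrable (fun ω ↦ X ω ^ 2) μ := hX.integrable_sq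
  have hlin : Integrable (fun ω ↦ 1 + t * X ω) μ := (integrable_const 1).add (hX1.const_mul t)
  have hpoint : ∀ᵐ ω ∂μ, exp (t * X ω) ≤ 1 + t * X ω + t ^ 2 * exp (t * b) / 2 * X ω ^ 2 := by
    filter_upwards [hXb] with ω hω
    convert exp_le_one_add_add_sq_div_two_mul_exp (mul_le_mul_of_nonneg_left hω ht)
      (mul_nonneg ht hb) using 1
    ring
  calc mgf X μ t
      ≤ ∫ ω, (1 + t * X ω + t ^ 2 * exp (t * b) / 2 * X ω ^ 2) ∂μ :=
        integral_mono_ae (integrable_exp_mul_of_le t b ht hX.aemeasurable hXb)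
          (hlin.add (hX2.const_mul _)) hpoint
    _ = 1 + t ^ 2 * exp (t * b) / 2 * ∫ ω, X ω ^ 2 ∂μ := by
        rw [integral_add hlin (hX2.const_mul _),
          integral_add (integrable_const 1) (hX1.const_mul t), integral_const_mul,
          integral_const_mul, hmean]
        simp
    _ ≤ 1 + t ^ 2 * σ2 * exp (t * b) / 2 := by
        have : 0 ≤ t ^ 2 * exp (t * b) / 2 := by positivity
        nlinarith
    _ ≤ exp (t ^ 2 * σ2 * exp (t * b) / 2) := by
        linarith [add_one_le_exp (t ^ 2 * σ2 * exp (t * b) / 2)]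

variable {ι : Type*} [Fintype ι] {X : ι → Ω → ℝ} {b σ2 : ℝ}

lemma measureReal_sum_ge_le_exp (hXm : ∀ i, Measurable (X i)) (hind : iIndepFun X μ)
    (hX : ∀ i, MemLp (X i) 2 μ) (hXb : ∀ i, ∀ᵐ ω ∂μ, X i ω ≤ b) (hb : 0 ≤ b)
    (hmean : ∀ i, μ[X i] = 0) (hvar : ∀ i, Var[X i; μ] ≤ σ2) {t : ℝ} (ht : 0 ≤ t) (T : ℝ) :
    μ.real {ω | T ≤ ∑ i, X i ω}
      ≤ exp (Fintype.card ι * (t ^ 2 * σ2 * exp (t * b) / 2) - t * T) := by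
  have hint : Integrable (fun ω ↦ exp (t * (∑ i, X i) ω)) μ :=
    hind.integrable_exp_mul_sum hXm fun i _ ↦
      integrable_exp_mul_of_le t b ht (hX i).aemeasurable (hXb i)
  have hmgf : mgf (∑ i, X i) μ t ≤ exp (Fintype.card ι * (t ^ 2 * σ2 * exp (t * b) / 2)) := by
    rw [hind.mgf_sum hXm, exp_nat_mul, ← Finset.card_univ, ← Finset.prod_const]
    exact Finset.prod_le_prod (fun _ _ ↦ mgf_nonneg)
      fun i _ ↦ mgf_le_exp_of_ae_le (hX i) (hXb i) hb (hmean i) (hvar i) ht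
  calc μ.real {ω | T ≤ ∑ i, X i ω}
      ≤ exp (-t * T) * mgf (∑ i, X i) μ t := by
        simpa only [Finset.sum_apply] using measure_ge_le_exp_mul_mgf T ht hint
    _ ≤ exp (-t * T) * exp (Fintype.card ι * (t ^ 2 * σ2 * exp (t * b) / 2)) := by gcongr
    _ = exp (Fintype.card ι * (t ^ 2 * σ2 * exp (t * b) / 2) - t * T) := by
        rw [← exp_add]; ring_nf

lemma measureReal_sum_ge_lt_exp_neg [Nonempty ι] (hXm : ∀ i, Measurable (X i))
    (hind : iIndepFun X μ) (hX : ∀ i, MemLp (X i) 2 μ) (hXb : ∀ i, ∀ᵐ ω ∂μ, X i ω ≤ b)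
    (hb : 0 < b) (hmean : ∀ i, μ[X i] = 0) (hvar : ∀ i, Var[X i; μ] ≤ σ2) (hσ2 : 0 < σ2)
    {x c : ℝ} (hx : 0 < x) (hc : 1 < c) :
    μ.real {ω | √(2 * Fintype.card ι * σ2 * x) + c * b * x ≤ ∑ i, X i ω} < exp (-x) := by
  obtain ⟨t, ht, hexponent⟩ :=
    exists_bernstein_exponent_lt_neg (mul_pos (Nat.cast_pos.2 (Fintype.card_pos (α := ι))) hσ2) hb
      hx hc
  calc μ.real {ω | √(2 * Fintype.card ι * σ2 * x) + c * b * x ≤ ∑ i, X i ω}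
      ≤ exp (Fintype.card ι * (t ^ 2 * σ2 * exp (t * b) / 2)
          - t * (√(2 * Fintype.card ι * σ2 * x) + c * b * x)) :=
        measureReal_sum_ge_le_exp hXm hind hX hXb hb.le hmean hvar ht _
    _ < exp (-x) := by
        rw [exp_lt_exp, mul_assoc (2 : ℝ)]
        linarith

end Bernstein

section Uniform

instance : IsProbabilityMeasure (volume.restrict (Icc (0 : ℝ) 1)) :=
  ⟨by simp⟩

variable {ε : ℝ}

lemma intervalIntegral_min_inv_sqrt_pow (h0 : 0 < ε) (h1 : ε ≤ 1) (k : ℕ) :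
    ∫ t in (0 : ℝ)..1, (min (√ε)⁻¹ (√t)⁻¹) ^ k = ε * ((√ε)⁻¹) ^ k + ∫ t in ε..1, ((√t)⁻¹) ^ k := by
  have hF : ∀ a b, IntervalIntegrable (fun t ↦ (min (√ε)⁻¹ (√t)⁻¹) ^ k) volume a b := by
    intro a b
    refine intervalIntegrable_iff.2 (Measure.integrableOn_of_bounded (M := ((√ε)⁻¹) ^ k)
      measure_Ioc_lt_top.ne (by fun_prop) (ae_of_all _ fun t ↦ ?_))
    have h := le_min (inv_nonneg.2 (sqrt_nonneg ε)) (inv_nonneg.2 (sqrt_nonneg t))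
    rw [norm_pow, Real.norm_of_nonneg h]
    exact pow_le_pow_left₀ h (min_le_left _ _) k
  rw [← intervalIntegral.integral_add_adjacent_intervals (hF 0 ε) (hF ε 1)]
  congr 1
  · rw [intervalIntegral.integral_congr_ae (g := fun _ ↦ ((√ε)⁻¹) ^ k),
      intervalIntegral.integral_const, sub_zero, smul_eq_mul]
    refine ae_of_all _ fun t ht ↦ ?_
    rw [uIoc_of_le h0.le] at ht
    rw [min_eq_left (inv_anti₀ (sqrt_pos.2 ht.1) (sqrt_le_sqrt ht.2))]
  · refine intervalIntegral.integral_congr fun t ht ↦ ?_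
    rw [uIcc_of_le h1] at ht
    rw [min_eq_right (inv_anti₀ (sqrt_pos.2 h0) (sqrt_le_sqrt ht.1))]

lemma setIntegral_Icc_min_inv_sqrt_one_sub_pow (h0 : 0 < ε) (h1 : ε ≤ 1) (k : ℕ) :
    ∫ u in Icc (0 : ℝ) 1, (min (√ε)⁻¹ (√(1 - u))⁻¹) ^ k
      = ε * ((√ε)⁻¹) ^ k + ∫ t in ε..1, ((√t)⁻¹) ^ k := by
  rw [integral_Icc_eq_integral_Ioc, ← intervalIntegral.integral_of_le zero_le_one,
    intervalIntegral.integral_comp_sub_left (fun t ↦ (min (√ε)⁻¹ (√t)⁻¹) ^ k), sub_self, sub_zero,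
    intervalIntegral_min_inv_sqrt_pow h0 h1]

lemma intervalIntegral_inv_sqrt (h0 : 0 < ε) : ∫ t in ε..1, (√t)⁻¹ = 2 - 2 * √ε := by
  have hpos : ∀ t ∈ uIcc ε 1, 0 < t := fun t ht ↦
    lt_of_lt_of_le (lt_min h0 one_pos) ht.1
  have hderiv : ∀ t ∈ uIcc ε 1, HasDerivAt (fun t ↦ 2 * √t) (√t)⁻¹ t := fun t ht ↦
    ((hasDerivAt_sqrt (hpos t ht).ne').const_mul 2).congr_deriv (by field_simp)
  have hcont : ContinuousOn (fun t ↦ (√t)⁻¹) (uIcc ε 1) :=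
    continuous_sqrt.continuousOn.inv₀ fun t ht ↦ (sqrt_pos.2 (hpos t ht)).ne'
  rw [intervalIntegral.integral_eq_sub_of_hasDerivAt hderiv hcont.intervalIntegrable, sqrt_one,
    mul_one]

lemma intervalIntegral_inv_sqrt_sq (h0 : 0 < ε) : ∫ t in ε..1, ((√t)⁻¹) ^ 2 = log (1 / ε) := by
  have hpos : ∀ t ∈ uIcc ε 1, 0 < t := fun t ht ↦
    lt_of_lt_of_le (lt_min h0 one_pos) ht.1
  rw [intervalIntegral.integral_congr fun t ht ↦ by rw [inv_pow, sq_sqrt (hpos t ht).le],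
    integral_inv_of_pos h0 one_pos]

lemma measurable_Sstat (ε : ℝ) : Measurable (Sstat ε) :=
  (Measurable.ite (measurableSet_lt measurable_id measurable_const) (by fun_prop)
    measurable_const).sub_const _

lemma abs_Sstat_le (h0 : 0 < ε) (h4 : ε ≤ 4) (u : ℝ) : |Sstat ε u| ≤ (√ε)⁻¹ := by
  have hs : 0 < √ε := sqrt_pos.2 h0
  have hs2 : √ε ≤ 2 := sqrt_le_iff.2 ⟨zero_le_two, by linarith⟩
  have hlow : 2 - √ε ≤ (√ε)⁻¹ := by
    rw [← one_div, le_div_iff₀ hs]; nlinarith [sq_nonneg (1 - √ε)]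
  have hmin : ∀ a : ℝ, 0 ≤ min (√ε)⁻¹ (√a)⁻¹ ∧ min (√ε)⁻¹ (√a)⁻¹ ≤ (√ε)⁻¹ := fun a ↦
    ⟨le_min (by positivity) (by positivity), min_le_left _ _⟩
  unfold Sstat
  split_ifs
  · rw [abs_le]; constructor <;> linarith [hmin (1 - u)]
  · rw [abs_le]; constructor <;> linarith

lemma Sstat_ae_eq (ε : ℝ) : Sstat ε =ᵐ[volume.restrict (Icc (0 : ℝ) 1)]
    fun u ↦ min (√ε)⁻¹ (√(1 - u))⁻¹ - (2 - √ε) := by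
  rw [Measure.restrict_congr_set Ico_ae_eq_Icc.symm]
  filter_upwards [ae_restrict_mem measurableSet_Ico] with u hu
  simp [Sstat, hu.2]

lemma setIntegral_Icc_min_inv_sqrt_one_sub (h0 : 0 < ε) (h1 : ε ≤ 1) :
    ∫ u in Icc (0 : ℝ) 1, min (√ε)⁻¹ (√(1 - u))⁻¹ = 2 - √ε := by
  have h := setIntegral_Icc_min_inv_sqrt_one_sub_pow h0 h1 1
  simp only [pow_one] at h
  rw [h, intervalIntegral_inv_sqrt h0, ← div_eq_mul_inv, div_sqrt]
  ring

lemma setIntegral_Icc_min_inv_sqrt_one_sub_sq (h0 : 0 < ε) (h1 : ε ≤ 1) :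
    ∫ u in Icc (0 : ℝ) 1, (min (√ε)⁻¹ (√(1 - u))⁻¹) ^ 2 = 1 + log (1 / ε) := by
  rw [setIntegral_Icc_min_inv_sqrt_one_sub_pow h0 h1 2, intervalIntegral_inv_sqrt_sq h0, inv_pow,
    sq_sqrt h0.le, mul_inv_cancel₀ h0.ne']

lemma memLp_min_inv_sqrt_one_sub (ε : ℝ) (p : ENNReal) :
    MemLp (fun u ↦ min (√ε)⁻¹ (√(1 - u))⁻¹) p (volume.restrict (Icc (0 : ℝ) 1)) :=
  MemLp.of_bound (by fun_prop) (√ε)⁻¹ (ae_of_all _ fun u ↦ by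
    rw [Real.norm_of_nonneg (le_min (by positivity) (by positivity))]
    exact min_le_left _ _)

lemma setIntegral_Icc_Sstat (h0 : 0 < ε) (h1 : ε ≤ 1) : ∫ u in Icc (0 : ℝ) 1, Sstat ε u = 0 := by
  rw [integral_congr_ae (Sstat_ae_eq ε),
    integral_sub ((memLp_min_inv_sqrt_one_sub ε 1).integrable le_rfl) (integrable_const _),
    setIntegral_Icc_min_inv_sqrt_one_sub h0 h1]
  simp

lemma variance_Sstat_le (h0 : 0 < ε) (h1 : ε ≤ 1) :
    Var[Sstat ε; volume.restrict (Icc (0 : ℝ) 1)] ≤ log (1 / ε) := by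
  have hs1 : √ε ≤ 1 := sqrt_le_one.2 h1
  rw [variance_congr (Sstat_ae_eq ε), variance_sub_const (by fun_prop),
    variance_eq_sub (memLp_min_inv_sqrt_one_sub ε 2)]
  simp only [Pi.pow_apply]
  rw [setIntegral_Icc_min_inv_sqrt_one_sub_sq h0 h1, setIntegral_Icc_min_inv_sqrt_one_sub h0 h1]
  nlinarith [sqrt_nonneg ε]

end Uniform

lemma measureReal_sum_Sstat_ge_lt_exp_neg {ι Ω : Type*} [Fintype ι] [Nonempty ι]
    [MeasurableSpace Ω] (μ : Measure Ω) [IsProbabilityMeasure μ] {V : ι → Ω → ℝ}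
    (hV_meas : ∀ i, Measurable (V i)) (hV_indep : iIndepFun V μ)
    (hV_unif : ∀ i, μ.map (V i) = volume.restrict (Icc (0 : ℝ) 1)) {ε x c : ℝ} (h0 : 0 < ε)
    (h1 : ε < 1) (hx : 0 < x) (hc : 1 < c) :
    μ.real {ω | √(2 * Fintype.card ι * log (1 / ε) * x) + c * (√ε)⁻¹ * x ≤ ∑ i, Sstat ε (V i ω)}
      < exp (-x) := by
  have hSm := measurable_Sstat ε
  have hSb := abs_Sstat_le h0 (by linarith)
  have hVm : ∀ i, AEMeasurable (V i) μ := fun i ↦ (hV_meas i).aemeasurable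
  refine measureReal_sum_ge_lt_exp_neg (fun i ↦ hSm.comp (hV_meas i)) (hV_indep.comp _ fun _ ↦ hSm)
    (fun i ↦ .of_bound (hSm.comp (hV_meas i)).aestronglyMeasurable _ (ae_of_all _ fun _ ↦ hSb _))
    (fun i ↦ ae_of_all _ fun _ ↦ (le_abs_self _).trans (hSb _)) (inv_pos.2 (sqrt_pos.2 h0))
    (fun i ↦ ?_) (fun i ↦ ?_) (log_pos (one_lt_one_div h0 h1)) hx hc
  · change ∫ ω, Sstat ε (V i ω) ∂μ = 0
    rw [← integral_map (hVm i) hSm.aestronglyMeasurable, hV_unif, setIntegral_Icc_Sstat h0 h1.le]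
  · rw [← variance_map hSm.aemeasurable (hVm i), hV_unif]
    exact variance_Sstat_le h0 h1.le

/-- If `V_1,…,V_n` are i.i.d. uniform on `[0,1]`, then
`P(∑_t S_ε(V_t) ≥ √(2 n log(1/ε) log(1/δ)) + (3/2) log(1/δ)/√ε) ≤ δ`; in
particular any exact critical value `τ⋆` with
`P(∑_t S_ε(V_t) ≥ τ⋆) = δ` satisfies `τ⋆ ≤ √(2 n log(1/ε) log(1/δ)) + (3/2) log(1/δ)/√ε`. -/
theorem null_concentration {n : ℕ} (hn : 1 ≤ n) (δ ε : ℝ)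
    (hδ : δ ∈ Set.Ioo (0:ℝ) 1) (hε : ε ∈ Set.Ioo (0:ℝ) 1)
    {Ω : Type*} [MeasurableSpace Ω] (μ : Measure Ω) [IsProbabilityMeasure μ]
    (V : Fin n → Ω → ℝ) (hV_meas : ∀ t, Measurable (V t))
    (hV_indep : iIndepFun V μ)
    (hV_unif : ∀ t, Measure.map (V t) μ = volume.restrict (Set.Icc (0:ℝ) 1)) :
    μ {ω | Real.sqrt (2 * n * Real.log (1/ε) * Real.log (1/δ))
            + (3/2) * Real.log (1/δ) / Real.sqrt ε ≤ ∑ t, Sstat ε (V t ω)}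
        ≤ ENNReal.ofReal δ ∧
    ∀ τ : ℝ, μ {ω | τ ≤ ∑ t, Sstat ε (V t ω)} = ENNReal.ofReal δ →
      τ ≤ Real.sqrt (2 * n * Real.log (1/ε) * Real.log (1/δ))
            + (3/2) * Real.log (1/δ) / Real.sqrt ε := by
  obtain ⟨hδ0, hδ1⟩ := hδ
  have : Nonempty (Fin n) := ⟨⟨0, hn⟩⟩
  have hlt := measureReal_sum_Sstat_ge_lt_exp_neg μ hV_meas hV_indep hV_unif hε.1 hε.2
    (log_pos (one_lt_one_div hδ0 hδ1)) (by norm_num : (1 : ℝ) < 3 / 2)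
  have hthreshold : √(2 * (Fintype.card (Fin n) : ℝ) * log (1 / ε) * log (1 / δ))
      + 3 / 2 * (√ε)⁻¹ * log (1 / δ)
      = √(2 * n * log (1 / ε) * log (1 / δ)) + 3 / 2 * log (1 / δ) / √ε := by
    rw [Fintype.card_fin]; ring
  have hδexp : exp (-log (1 / δ)) = δ := by rw [one_div, log_inv, neg_neg, exp_log hδ0]
  rw [hthreshold, hδexp] at hlt
  replace hlt := (ENNReal.ofReal_lt_ofReal_iff hδ0).2 hlt
  rw [ofReal_measureReal] at hlt
  refine ⟨hlt.le, fun τ hτ ↦ not_lt.1 fun hτT ↦ ?_⟩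
  exact ((measure_mono fun ω (hω : τ ≤ ∑ t, Sstat ε (V t ω)) ↦ hτT.le.trans hω).trans_lt hlt).ne hτ
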